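/- Let S be a finite set, p, p' : S ∪ {oX} → ℝ, let oY ∈ S and oX ∉ S with oX ≠ oY, suppose p(oY) ≠ 1 and p'(o) = p(o) for all o ∈ S \ {oY}. Then for every natural number i, W(i + 1, (S \ {oY}) ∪ {oX}, p') = g(i) · p'(oX) + g(i+1) · (1 − p'(oX)) and W(0, (S \ {oY}) ∪ {oX}, p') = g(0) · (1 − p'(oX)), where g is defined recursively by g(0) = W(0, S, p) / (1 − p(oY)) and g(i+1) = (W(i+1, S, p) − g(i) · p(oY)) / (1 − p(oY)). (This is the correctness of the paper's complete Case-3 step, composing adjustProbs with one dynamic-programming round: the probabilities P_{i,S^{oY}, y} of the current instance are computed from the probabilities P_{i,S^{oX}, x} of the previous instance.) -/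

import Mathlib

/-!
Adding an object `a` with probability `p a` to `S` acts on the rank probabilities as
`W (i+1) (insert a S) = W i S · p a + W (i+1) S · (1 - p a)`. When `p a ≠ 1` this recursion
can be run backwards, so the sequence `g` is exactly `i ↦ W i (S \ {oY}) p`; one forward step
with `oX` then gives the rank probabilities of `(S \ {oY}) ∪ {oX}`.
-/

/-- Rank-probability polynomial: probability that exactly `i` of the objects in `S`
occur, where object `o` occurs with probability `p o`. -/
def W {α : Type*} [DecidableEq α] (i : ℕ) (S : Finset α) (p : α → ℝ) : ℝ :=
  ∑ T ∈ S.powersetCard i, (∏ o ∈ T, p o) * ∏ o ∈ S \ T, (1 - p o)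

open Finset

section RankProbability

variable {α : Type*} [DecidableEq α]

lemma W_congr {i : ℕ} {S : Finset α} {p q : α → ℝ} (h : ∀ o ∈ S, p o = q o) :
    W i S p = W i S q := by
  refine sum_congr rfl fun T hT => ?_
  have hTS : T ⊆ S := (mem_powersetCard.mp hT).1
  congr 1
  · exact prod_congr rfl fun o ho => h o (hTS ho)
  · exact prod_congr rfl fun o ho => by rw [h o (mem_sdiff.mp ho).1]

lemma W_zero (S : Finset α) (p : α → ℝ) : W 0 S p = ∏ o ∈ S, (1 - p o) := by
  simp [W]

lemma W_zero_insert {a : α} {S : Finset α} (ha : a ∉ S) (p : α → ℝ) :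
    W 0 (insert a S) p = (1 - p a) * W 0 S p := by
  rw [W_zero, W_zero, prod_insert ha]

lemma W_succ_insert {a : α} {S : Finset α} (ha : a ∉ S) (i : ℕ) (p : α → ℝ) :
    W (i + 1) (insert a S) p = W i S p * p a + W (i + 1) S p * (1 - p a) := by
  have not_mem_of_mem {T : Finset α} {k : ℕ} (hT : T ∈ S.powersetCard k) : a ∉ T :=
    fun haT => ha ((mem_powersetCard.mp hT).1 haT)
  have hdisj : Disjoint (S.powersetCard (i + 1)) ((S.powersetCard i).image (insert a)) := by
    refine disjoint_left.mpr fun T hT hT' => ?_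
    obtain ⟨T', -, rfl⟩ := mem_image.mp hT'
    exact not_mem_of_mem hT (mem_insert_self a T')
  have hinj : Set.InjOn (insert a) (S.powersetCard i : Set (Finset α)) :=
    fun T hT T' hT' h => by
      rw [← erase_insert (not_mem_of_mem hT), h, erase_insert (not_mem_of_mem hT')]
  have without_a : ∀ T ∈ S.powersetCard (i + 1),
      (∏ o ∈ T, p o) * ∏ o ∈ insert a S \ T, (1 - p o)
        = ((∏ o ∈ T, p o) * ∏ o ∈ S \ T, (1 - p o)) * (1 - p a) := fun T hT => by
    rw [insert_sdiff_of_notMem _ (not_mem_of_mem hT),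
      prod_insert fun h => ha (mem_sdiff.mp h).1]
    ring
  have with_a : ∀ T ∈ S.powersetCard i,
      (∏ o ∈ insert a T, p o) * ∏ o ∈ insert a S \ insert a T, (1 - p o)
        = ((∏ o ∈ T, p o) * ∏ o ∈ S \ T, (1 - p o)) * p a := fun T hT => by
    rw [insert_sdiff_insert, sdiff_insert_of_notMem ha, prod_insert (not_mem_of_mem hT)]
    ring
  unfold W
  rw [powersetCard_succ_insert ha, sum_union hdisj, sum_image hinj, sum_congr rfl without_a,
    sum_congr rfl with_a, ← sum_mul, ← sum_mul, add_comm]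

lemma eq_W_of_insert_recurrence {a : α} {S : Finset α} (ha : a ∉ S) {p : α → ℝ}
    (hpa : p a ≠ 1) {g : ℕ → ℝ} (hg0 : g 0 = W 0 (insert a S) p / (1 - p a))
    (hg : ∀ i, g (i + 1) = (W (i + 1) (insert a S) p - g i * p a) / (1 - p a)) (i : ℕ) :
    g i = W i S p := by
  have hpa' : 1 - p a ≠ 0 := sub_ne_zero.mpr hpa.symm
  induction i with
  | zero => rw [hg0, W_zero_insert ha, mul_div_cancel_left₀ _ hpa']
  | succ i ih => rw [hg, ih, W_succ_insert ha, add_sub_cancel_left, mul_div_cancel_right₀ _ hpa']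

end RankProbability

theorem case3_correct_general {α : Type*} [DecidableEq α] (S : Finset α) (p p' : α → ℝ)
    (oY oX : α) (hoY : oY ∈ S) (hoX : oX ∉ S)
    (hp : p oY ≠ 1) (hpp' : ∀ o ∈ S.erase oY, p' o = p o) (g : ℕ → ℝ)
    (hg0 : g 0 = W 0 S p / (1 - p oY))
    (hg : ∀ i : ℕ, g (i + 1) = (W (i + 1) S p - g i * p oY) / (1 - p oY)) :
    (∀ i : ℕ, W (i + 1) (insert oX (S.erase oY)) p'
        = g i * p' oX + g (i + 1) * (1 - p' oX)) ∧
      W 0 (insert oX (S.erase oY)) p' = g 0 * (1 - p' oX) := by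
  rw [← insert_erase hoY] at hg0 hg
  have hgW : ∀ i, g i = W i (S.erase oY) p' := fun i => by
    rw [eq_W_of_insert_recurrence (notMem_erase oY S) hp hg0 hg i,
      W_congr fun o ho => (hpp' o ho).symm]
  have hoX' : oX ∉ S.erase oY := fun h => hoX (mem_of_mem_erase h)
  refine ⟨fun i => ?_, ?_⟩
  · rw [W_succ_insert hoX', hgW, hgW]
  · rw [W_zero_insert hoX', hgW, mul_comm]

/-- Correctness of the complete Case-3 step (`adjustProbs` followed by one
dynamic-programming round): with `oY ∈ S`, `oX ∉ S`, `p(oY) ≠ 1`, `p'` agreeing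
with `p` on `S \ {oY}`, and `g` the adjusted sequence, for every `i`
`W(i+1, (S \ {oY}) ∪ {oX}, p') = g(i) · p'(oX) + g(i+1) · (1 − p'(oX))` and
`W(0, (S \ {oY}) ∪ {oX}, p') = g(0) · (1 − p'(oX))`. -/
theorem case3_correct {α : Type*} [DecidableEq α] (S : Finset α) (p p' : α → ℝ)
    (oY oX : α) (hoY : oY ∈ S) (hoX : oX ∉ S) (hXY : oX ≠ oY)
    (hp : p oY ≠ 1) (hpp' : ∀ o ∈ S.erase oY, p' o = p o) (g : ℕ → ℝ)
    (hg0 : g 0 = W 0 S p / (1 - p oY))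
    (hg : ∀ i : ℕ, g (i + 1) = (W (i + 1) S p - g i * p oY) / (1 - p oY)) :
    (∀ i : ℕ, W (i + 1) (insert oX (S.erase oY)) p'
        = g i * p' oX + g (i + 1) * (1 - p' oX)) ∧
      W 0 (insert oX (S.erase oY)) p' = g 0 * (1 - p' oX) :=
  case3_correct_general S p p' oY oX hoY hoX hp hpp' g hg0 hg
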